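/- arXiv:1302.0075 — 3 statements merged into one kernel-verified Lean document; each statement's English description precedes it below -/
import Mathlib

section
/- Let Ω ⊂ ℝⁿ be a bounded open set and let u : Ω → ℝ^{n+1} be 1-Lipschitz (for instance, the continuous representative of a W^{2,2} isometric immersion). Let C₁ and C₂ be line segments contained in Ω intersecting at a point x lying in the relative interior of both C₁ and C₂, and suppose the restriction of u to each C_i is an affine isometry (u is affine on C_i and |u(y) − u(z)| = |y − z| for all y, z ∈ C_i). Let H be the convex hull of C₁ ∪ C₂. Then u is an affine isometry on H ∩ Ω: u coincides on H ∩ Ω with an affine map and |u(y) − u(z)| = |y − z| for all y, z ∈ H ∩ Ω. -/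
open Set
open scoped RealInnerProductSpace

noncomputable section

/-- `u` is an affine isometry on the set `S`: it agrees on `S` with an affine
map and preserves Euclidean distances between points of `S`. -/
def IsAffineIsometryOn {n m : ℕ}
    (u : EuclideanSpace ℝ (Fin n) → EuclideanSpace ℝ (Fin m))
    (S : Set (EuclideanSpace ℝ (Fin n))) : Prop :=
  (∃ A : EuclideanSpace ℝ (Fin n) →ᵃ[ℝ] EuclideanSpace ℝ (Fin m),
    ∀ y ∈ S, u y = A y) ∧
  ∀ y ∈ S, ∀ z ∈ S, dist (u y) (u z) = dist y z

lemma normsq_smul_add_smul {m : ℕ} (v w : EuclideanSpace ℝ (Fin m)) (s t : ℝ) :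
    ‖s • v + t • w‖^2 = s^2*‖v‖^2 + 2*(s*t*⟪v, w⟫) + t^2*‖w‖^2 := by
  rw [@norm_add_sq_real, real_inner_smul_left, real_inner_smul_right,
    norm_smul, norm_smul, mul_pow, mul_pow]
  simp [sq_abs]
  ring

set_option maxHeartbeats 1000000 in
/-- **Spreading affine isometries from two crossing segments (Lemma 3.13).**
Let `u : Ω → ℝ^{n+1}` be 1-Lipschitz on the bounded open set `Ω ⊆ ℝⁿ`, and let
`C₁ = [a₁,b₁]` and `C₂ = [a₂,b₂]` be segments in `Ω` meeting at a point `x`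
interior to both, on each of which `u` is an affine isometry. Then `u` is an
affine isometry on `H ∩ Ω`, where `H` is the convex hull of `C₁ ∪ C₂`. -/
theorem affine_isometry_on_convex_hull_of_segments
    {n : ℕ}
    (Ω : Set (EuclideanSpace ℝ (Fin n)))
    (hΩopen : IsOpen Ω) (hΩbdd : Bornology.IsBounded Ω)
    (u : EuclideanSpace ℝ (Fin n) → EuclideanSpace ℝ (Fin (n+1)))
    (hu : LipschitzOnWith 1 u Ω)
    (a₁ b₁ a₂ b₂ : EuclideanSpace ℝ (Fin n))
    (h₁ : a₁ ≠ b₁) (h₂ : a₂ ≠ b₂)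
    (hC₁ : segment ℝ a₁ b₁ ⊆ Ω) (hC₂ : segment ℝ a₂ b₂ ⊆ Ω)
    (x : EuclideanSpace ℝ (Fin n))
    (hx₁ : x ∈ openSegment ℝ a₁ b₁) (hx₂ : x ∈ openSegment ℝ a₂ b₂)
    (hu₁ : IsAffineIsometryOn u (segment ℝ a₁ b₁))
    (hu₂ : IsAffineIsometryOn u (segment ℝ a₂ b₂)) :
    IsAffineIsometryOn u
      (convexHull ℝ (segment ℝ a₁ b₁ ∪ segment ℝ a₂ b₂) ∩ Ω) := by
  classical
  obtain ⟨⟨A₁, hA₁⟩, hd₁⟩ := hu₁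
  obtain ⟨⟨A₂, hA₂⟩, hd₂⟩ := hu₂
  have hxs₁ : x ∈ segment ℝ a₁ b₁ := openSegment_subset_segment ℝ a₁ b₁ hx₁
  have hxs₂ : x ∈ segment ℝ a₂ b₂ := openSegment_subset_segment ℝ a₂ b₂ hx₂
  set e₁ := b₁ - a₁ with he₁def
  set e₂ := b₂ - a₂ with he₂def
  have he₁ : e₁ ≠ 0 := sub_ne_zero.mpr (Ne.symm h₁)
  have he₂ : e₂ ≠ 0 := sub_ne_zero.mpr (Ne.symm h₂)
  rw [openSegment_eq_image'] at hx₁ hx₂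
  obtain ⟨t₁, ht₁, hxt₁⟩ := hx₁
  obtain ⟨t₂, ht₂, hxt₂⟩ := hx₂
  set L₁ := A₁.linear with hL₁def
  set L₂ := A₂.linear with hL₂def
  set f₁ := L₁ e₁ with hf₁def
  set f₂ := L₂ e₂ with hf₂def
  -- basic difference identities on the segments
  have hsub₁ : ∀ p ∈ segment ℝ a₁ b₁, ∀ q ∈ segment ℝ a₁ b₁, u p - u q = L₁ (p - q) := by
    intro p hp q hq
    rw [hA₁ p hp, hA₁ q hq, ← vsub_eq_sub, ← vsub_eq_sub, A₁.linearMap_vsub]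
  have hsub₂ : ∀ p ∈ segment ℝ a₂ b₂, ∀ q ∈ segment ℝ a₂ b₂, u p - u q = L₂ (p - q) := by
    intro p hp q hq
    rw [hA₂ p hp, hA₂ q hq, ← vsub_eq_sub, ← vsub_eq_sub, A₂.linearMap_vsub]
  have hnf₁ : ‖f₁‖ = ‖e₁‖ := by
    have h := hsub₁ b₁ (right_mem_segment ℝ a₁ b₁) a₁ (left_mem_segment ℝ a₁ b₁)
    have h2 := hd₁ b₁ (right_mem_segment ℝ a₁ b₁) a₁ (left_mem_segment ℝ a₁ b₁)
    rw [dist_eq_norm, dist_eq_norm, h] at h2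
    simpa [← he₁def] using h2
  have hnf₂ : ‖f₂‖ = ‖e₂‖ := by
    have h := hsub₂ b₂ (right_mem_segment ℝ a₂ b₂) a₂ (left_mem_segment ℝ a₂ b₂)
    have h2 := hd₂ b₂ (right_mem_segment ℝ a₂ b₂) a₂ (left_mem_segment ℝ a₂ b₂)
    rw [dist_eq_norm, dist_eq_norm, h] at h2
    simpa [← he₂def] using h2
  -- representation of points on the segments
  have hrep₁ : ∀ p ∈ segment ℝ a₁ b₁, ∃ s : ℝ, p - x = s • e₁ := by
    intro p hp
    rw [segment_eq_image'] at hp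
    obtain ⟨r, hr, rfl⟩ := hp
    exact ⟨r - t₁, by rw [← hxt₁]; module⟩
  have hrep₂ : ∀ p ∈ segment ℝ a₂ b₂, ∃ s : ℝ, p - x = s • e₂ := by
    intro p hp
    rw [segment_eq_image'] at hp
    obtain ⟨r, hr, rfl⟩ := hp
    exact ⟨r - t₂, by rw [← hxt₂]; module⟩
  have hval₁ : ∀ p ∈ segment ℝ a₁ b₁, ∃ s : ℝ, p - x = s • e₁ ∧ u p = u x + s • f₁ := by
    intro p hp
    obtain ⟨s, hs⟩ := hrep₁ p hp
    refine ⟨s, hs, ?_⟩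
    have h := hsub₁ p hp x hxs₁
    rw [hs, map_smul] at h
    exact (sub_eq_iff_eq_add'.mp h)
  have hval₂ : ∀ p ∈ segment ℝ a₂ b₂, ∃ s : ℝ, p - x = s • e₂ ∧ u p = u x + s • f₂ := by
    intro p hp
    obtain ⟨s, hs⟩ := hrep₂ p hp
    refine ⟨s, hs, ?_⟩
    have h := hsub₂ p hp x hxs₂
    rw [hs, map_smul] at h
    exact (sub_eq_iff_eq_add'.mp h)
  -- membership of parametrized points
  have hmem₁ : ∀ s : ℝ, 0 ≤ t₁ + s → t₁ + s ≤ 1 → x + s • e₁ ∈ segment ℝ a₁ b₁ := by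
    intro s h0 h1
    rw [segment_eq_image']
    exact ⟨t₁ + s, ⟨h0, h1⟩, by rw [← he₁def, ← hxt₁]; module⟩
  have hmem₂ : ∀ s : ℝ, 0 ≤ t₂ + s → t₂ + s ≤ 1 → x + s • e₂ ∈ segment ℝ a₂ b₂ := by
    intro s h0 h1
    rw [segment_eq_image']
    exact ⟨t₂ + s, ⟨h0, h1⟩, by rw [← he₂def, ← hxt₂]; module⟩
  -- key inequality from 1-Lipschitz
  have key : ∀ s t : ℝ, 0 ≤ t₁ + s → t₁ + s ≤ 1 → 0 ≤ t₂ + t → t₂ + t ≤ 1 →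
      s * t * ⟪e₁, e₂⟫ ≤ s * t * ⟪f₁, f₂⟫ := by
    intro s t hs0 hs1 ht0 ht1
    have hp := hmem₁ s hs0 hs1
    have hq := hmem₂ t ht0 ht1
    have hup : u (x + s • e₁) = u x + s • f₁ := by
      have h := hsub₁ (x + s • e₁) hp x hxs₁
      rw [show x + s • e₁ - x = s • e₁ by abel, map_smul] at h
      exact sub_eq_iff_eq_add'.mp h
    have huq : u (x + t • e₂) = u x + t • f₂ := by
      have h := hsub₂ (x + t • e₂) hq x hxs₂
      rw [show x + t • e₂ - x = t • e₂ by abel, map_smul] at h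
      exact sub_eq_iff_eq_add'.mp h
    have hlip : dist (u (x + s • e₁)) (u (x + t • e₂)) ≤ dist (x + s • e₁) (x + t • e₂) := by
      have h := hu.dist_le_mul (x + s • e₁) (hC₁ hp) (x + t • e₂) (hC₂ hq)
      simpa using h
    rw [hup, huq, dist_eq_norm, dist_eq_norm,
      show u x + s • f₁ - (u x + t • f₂) = s • f₁ + (-t) • f₂ by module,
      show x + s • e₁ - (x + t • e₂) = s • e₁ + (-t) • e₂ by module] at hlip
    have hsq := mul_self_le_mul_self (norm_nonneg _) hlip
    rw [← pow_two, ← pow_two, normsq_smul_add_smul, normsq_smul_add_smul, hnf₁, hnf₂] at hsq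
    nlinarith [hsq]
  have hG : ⟪f₁, f₂⟫ = ⟪e₁, e₂⟫ := by
    have k1 := key (1 - t₁) (1 - t₂) (by linarith) (by linarith) (by linarith) (by linarith)
    have k2 := key (-t₁) (1 - t₂) (by linarith [ht₁.1]) (by linarith [ht₁.1])
      (by linarith) (by linarith)
    have c1 : (0:ℝ) < (1 - t₁) * (1 - t₂) := mul_pos (by linarith [ht₁.2]) (by linarith [ht₂.2])
    have c2 : (0:ℝ) < t₁ * (1 - t₂) := mul_pos ht₁.1 (by linarith [ht₂.2])
    nlinarith [k1, k2, c1, c2]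
  have hnormst : ∀ s t : ℝ, ‖s • f₁ + t • f₂‖ = ‖s • e₁ + t • e₂‖ := by
    intro s t
    have h1 : ‖s • f₁ + t • f₂‖^2 = ‖s • e₁ + t • e₂‖^2 := by
      rw [normsq_smul_add_smul, normsq_smul_add_smul, hnf₁, hnf₂, hG]
    calc ‖s • f₁ + t • f₂‖ = Real.sqrt (‖s • f₁ + t • f₂‖^2) := (Real.sqrt_sq (norm_nonneg _)).symm
      _ = Real.sqrt (‖s • e₁ + t • e₂‖^2) := by rw [h1]
      _ = ‖s • e₁ + t • e₂‖ := Real.sqrt_sq (norm_nonneg _)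
  -- construct the linear map L with L e₁ = f₁, L e₂ = f₂
  obtain ⟨L, hLe₁, hLe₂⟩ : ∃ L : EuclideanSpace ℝ (Fin n) →ₗ[ℝ] EuclideanSpace ℝ (Fin (n+1)),
      L e₁ = f₁ ∧ L e₂ = f₂ := by
    have hne1 : ‖e₁‖^2 ≠ 0 := pow_ne_zero 2 (norm_ne_zero_iff.mpr he₁)
    by_cases hdep : ∃ c : ℝ, e₂ = c • e₁
    · obtain ⟨c, hc⟩ := hdep
      have hf₂c : f₂ = c • f₁ := by
        have h0 : ‖(-c) • e₁ + (1:ℝ) • e₂‖ = 0 := by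
          rw [hc, show (-c) • e₁ + (1:ℝ) • (c • e₁) = (0 : EuclideanSpace ℝ (Fin n)) by module,
            norm_zero]
        have h1 := hnormst (-c) 1
        rw [h0] at h1
        have h2 : (-c) • f₁ + (1:ℝ) • f₂ = 0 := norm_eq_zero.mp h1
        have h2' : f₂ - c • f₁ = 0 := by rw [← h2]; module
        exact sub_eq_zero.mp h2'
      refine ⟨{ toFun := fun v => ((‖e₁‖^2)⁻¹ * ⟪e₁, v⟫) • f₁,
                map_add' := by intro a b; simp only [inner_add_right]; module,
                map_smul' := by intro c' a; simp only [inner_smul_right, RingHom.id_apply]; module },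
              ?_, ?_⟩
      · show ((‖e₁‖^2)⁻¹ * ⟪e₁, e₁⟫) • f₁ = f₁
        rw [real_inner_self_eq_norm_sq, inv_mul_cancel₀ hne1, one_smul]
      · show ((‖e₁‖^2)⁻¹ * ⟪e₁, e₂⟫) • f₁ = f₂
        rw [hc, real_inner_smul_right, real_inner_self_eq_norm_sq, hf₂c,
          show (‖e₁‖^2)⁻¹ * (c * ‖e₁‖^2) = c by field_simp]
    · set g := ⟪e₁, e₂⟫ with hgdef
      set D := ‖e₁‖^2 * ‖e₂‖^2 - g^2 with hDdef
      have hD : D ≠ 0 := by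
        intro h0
        rw [hDdef] at h0
        apply hdep
        refine ⟨g / ‖e₁‖^2, ?_⟩
        have hnrm : ‖(-(g / ‖e₁‖^2)) • e₁ + (1:ℝ) • e₂‖^2 = 0 := by
          rw [normsq_smul_add_smul, ← hgdef]
          have h9 : g^2 = ‖e₁‖^2 * ‖e₂‖^2 := by linarith
          field_simp
          nlinarith [h9, hne1]
        have hz : (-(g / ‖e₁‖^2)) • e₁ + (1:ℝ) • e₂ = 0 := by
          have := (pow_eq_zero_iff (n := 2) (by norm_num)).mp hnrm
          exact norm_eq_zero.mp this
        rw [one_smul, neg_smul] at hz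
        have : e₂ = (g / ‖e₁‖^2) • e₁ := by
          have h5 : e₂ - (g / ‖e₁‖^2) • e₁ = 0 := by rw [← hz]; abel
          exact sub_eq_zero.mp h5
        exact this
      refine ⟨{ toFun := fun v => ((‖e₂‖^2 * ⟪e₁, v⟫ - g * ⟪e₂, v⟫)/D) • f₁
                  + ((‖e₁‖^2 * ⟪e₂, v⟫ - g * ⟪e₁, v⟫)/D) • f₂,
                map_add' := by intro a b; simp only [inner_add_right]; module,
                map_smul' := by intro c' a; simp only [inner_smul_right, RingHom.id_apply]; module },
              ?_, ?_⟩
      · show ((‖e₂‖^2 * ⟪e₁, e₁⟫ - g * ⟪e₂, e₁⟫)/D) • f₁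
            + ((‖e₁‖^2 * ⟪e₂, e₁⟫ - g * ⟪e₁, e₁⟫)/D) • f₂ = f₁
        rw [real_inner_self_eq_norm_sq, (real_inner_comm e₁ e₂).trans hgdef.symm]
        rw [show (‖e₂‖^2 * ‖e₁‖^2 - g * g)/D = 1 by rw [div_eq_one_iff_eq hD, hDdef]; ring]
        rw [show (‖e₁‖^2 * g - g * ‖e₁‖^2)/D = 0 by rw [div_eq_zero_iff]; left; ring]
        rw [one_smul, zero_smul, add_zero]
      · show ((‖e₂‖^2 * ⟪e₁, e₂⟫ - g * ⟪e₂, e₂⟫)/D) • f₁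
            + ((‖e₁‖^2 * ⟪e₂, e₂⟫ - g * ⟪e₁, e₂⟫)/D) • f₂ = f₂
        rw [real_inner_self_eq_norm_sq, ← hgdef]
        rw [show (‖e₂‖^2 * g - g * ‖e₂‖^2)/D = 0 by rw [div_eq_zero_iff]; left; ring]
        rw [show (‖e₁‖^2 * ‖e₂‖^2 - g * g)/D = 1 by rw [div_eq_one_iff_eq hD, hDdef]; ring]
        rw [zero_smul, one_smul, zero_add]
  -- the global affine map
  set A : EuclideanSpace ℝ (Fin n) →ᵃ[ℝ] EuclideanSpace ℝ (Fin (n+1)) :=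
    { toFun := fun v => u x + L (v - x)
      linear := L
      map_vadd' := by
        intro p v
        show u x + L (v + p - x) = L v + (u x + L (p - x))
        rw [add_sub_assoc, map_add]; abel } with hAdef
  have hApt : ∀ w, A w = u x + L (w - x) := fun _ => rfl
  have huA₁ : ∀ p ∈ segment ℝ a₁ b₁, u p = A p := by
    intro p hp
    obtain ⟨s, hs, hv⟩ := hval₁ p hp
    rw [hv, hApt, hs, map_smul, hLe₁]
  have huA₂ : ∀ p ∈ segment ℝ a₂ b₂, u p = A p := by
    intro p hp
    obtain ⟨s, hs, hv⟩ := hval₂ p hp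
    rw [hv, hApt, hs, map_smul, hLe₂]
  -- representation of hull points
  have hHrep : ∀ w ∈ convexHull ℝ (segment ℝ a₁ b₁ ∪ segment ℝ a₂ b₂),
      ∃ p ∈ segment ℝ a₁ b₁, ∃ q ∈ segment ℝ a₂ b₂,
        ∃ θ : ℝ, 0 ≤ θ ∧ θ ≤ 1 ∧ w = AffineMap.lineMap p q θ := by
    intro w hw
    rw [(convex_segment a₁ b₁).convexHull_union (convex_segment a₂ b₂)
      ⟨a₁, left_mem_segment ℝ a₁ b₁⟩ ⟨a₂, left_mem_segment ℝ a₂ b₂⟩, mem_convexJoin] at hw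
    obtain ⟨p, hp, q, hq, hw⟩ := hw
    rw [segment_eq_image_lineMap] at hw
    obtain ⟨θ, hθ, rfl⟩ := hw
    exact ⟨p, hp, q, hq, θ, hθ.1, hθ.2, rfl⟩
  have hspan : ∀ w ∈ convexHull ℝ (segment ℝ a₁ b₁ ∪ segment ℝ a₂ b₂),
      ∃ s t : ℝ, w - x = s • e₁ + t • e₂ := by
    intro w hw
    obtain ⟨p, hp, q, hq, θ, _, _, rfl⟩ := hHrep w hw
    obtain ⟨s, hs⟩ := hrep₁ p hp
    obtain ⟨t, ht⟩ := hrep₂ q hq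
    refine ⟨(1-θ)*s, θ*t, ?_⟩
    have h : (AffineMap.lineMap p q θ : EuclideanSpace ℝ (Fin n)) - x
        = (1-θ) • (p - x) + θ • (q - x) := by
      simp only [AffineMap.lineMap_apply, vsub_eq_sub, vadd_eq_add]
      module
    rw [h, hs, ht]; module
  -- the main pointwise identity
  have hmain : ∀ w ∈ convexHull ℝ (segment ℝ a₁ b₁ ∪ segment ℝ a₂ b₂) ∩ Ω, u w = A w := by
    rintro w ⟨hwH, hwΩ⟩
    obtain ⟨p, hp, q, hq, θ, hθ0, hθ1, rfl⟩ := hHrep w hwH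
    obtain ⟨s, hs, hvp⟩ := hval₁ p hp
    obtain ⟨t, ht, hvq⟩ := hval₂ q hq
    have hupq : dist (u p) (u q) = dist p q := by
      rw [hvp, hvq, dist_eq_norm, dist_eq_norm,
        show u x + s • f₁ - (u x + t • f₂) = s • f₁ + (-t) • f₂ by module,
        show p - q = s • e₁ + (-t) • e₂ by
          rw [show p - q = (p - x) - (q - x) by abel, hs, ht]; module,
        hnormst]
    have hd1 : dist (u p) (u (AffineMap.lineMap p q θ)) ≤ θ * dist p q := by
      have h := hu.dist_le_mul p (hC₁ hp) (AffineMap.lineMap p q θ) hwΩ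
      have h2 : dist p (AffineMap.lineMap p q θ : EuclideanSpace ℝ (Fin n)) = θ * dist p q := by
        rw [dist_comm, dist_lineMap_left]
        simp [abs_of_nonneg hθ0]
      calc dist (u p) (u (AffineMap.lineMap p q θ)) ≤ dist p (AffineMap.lineMap p q θ) := by
            simpa using h
        _ = θ * dist p q := h2
    have hd2 : dist (u (AffineMap.lineMap p q θ)) (u q) ≤ (1 - θ) * dist p q := by
      have h := hu.dist_le_mul (AffineMap.lineMap p q θ) hwΩ q (hC₂ hq)
      have h2 : dist (AffineMap.lineMap p q θ : EuclideanSpace ℝ (Fin n)) q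
          = (1 - θ) * dist p q := by
        rw [dist_lineMap_right]
        simp [abs_of_nonneg (by linarith : (0:ℝ) ≤ 1 - θ)]
      calc dist (u (AffineMap.lineMap p q θ)) (u q) ≤ dist (AffineMap.lineMap p q θ) q := by
            simpa using h
        _ = (1 - θ) * dist p q := h2
    have htri := dist_triangle (u p) (u (AffineMap.lineMap p q θ)) (u q)
    rw [hupq] at htri
    have he1 : dist (u p) (u (AffineMap.lineMap p q θ)) = θ * dist (u p) (u q) := by
      rw [hupq]; linarith
    have he2 : dist (u (AffineMap.lineMap p q θ)) (u q) = (1 - θ) * dist (u p) (u q) := by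
      rw [hupq]; linarith
    have hline := eq_lineMap_of_dist_eq_mul_of_dist_eq_mul he1 he2
    rw [hline, huA₁ p hp, huA₂ q hq]
    exact (A.apply_lineMap p q θ).symm
  refine ⟨⟨A, hmain⟩, ?_⟩
  intro y hy z hz
  obtain ⟨hyH, hyΩ⟩ := hy
  obtain ⟨hzH, hzΩ⟩ := hz
  obtain ⟨s, t, hyx⟩ := hspan y hyH
  obtain ⟨s', t', hzx⟩ := hspan z hzH
  rw [hmain y ⟨hyH, hyΩ⟩, hmain z ⟨hzH, hzΩ⟩, dist_eq_norm, dist_eq_norm]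
  have h1 : A y - A z = L (y - z) := by
    rw [hApt, hApt,
      show u x + L (y - x) - (u x + L (z - x)) = L (y - x) - L (z - x) by abel,
      ← map_sub]
    congr 1
    abel
  have h2 : y - z = (s - s') • e₁ + (t - t') • e₂ := by
    rw [show y - z = (y - x) - (z - x) by abel, hyx, hzx]; module
  rw [h1, h2, map_add, map_smul, map_smul, hLe₁, hLe₂, hnormst, ← h2]
end
end

section
/- Let Ω ⊂ ℝⁿ be a bounded open set and let u : Ω → ℝ^{n+1} be 1-Lipschitz (for instance, the continuous representative of a W^{2,2} isometric immersion). Let U₁ and U₂ be regions in Ω of dimensions k₁ and k₂ respectively (i.e., each U_i is a relatively open connected subset of a k_i-dimensional affine subspace of ℝⁿ, contained in Ω) with U₁ ∩ U₂ ≠ ∅, and suppose there exists a point x ∈ U₁ ∩ U₂ belonging to the relative interior of both U₁ and U₂. If u is an affine isometry on U₁ and on U₂, then u is an affine isometry on conv(U₁ ∪ U₂) ∩ Ω, where conv denotes the convex hull. -/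
/-!
Reflecting a point `z ∈ U₂` through `x` inside `U₂`, where `u` is affine, turns the Lipschitz
bound `‖u y - u z‖ ≤ ‖y - z‖` for `y ∈ U₁` into the reverse inequality, so `u` is an isometry
of `U₁ ∪ U₂`. An isometry of a set in a Hilbert space preserves the Gram matrix of the vectors
`y - x`, hence agrees with an affine map `A` that is isometric on the affine span. For `p` in
the hull, `z ↦ ‖u p - A z‖² - ‖A p - A z‖²` is affine in `z` and nonpositive on `U₁ ∪ U₂` by
the Lipschitz bound, hence nonpositive at `z = p`, which forces `u p = A p`.
-/

open Set

noncomputable section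

/-- `U` is a `k`-dimensional region: a nonempty relatively open connected
subset of a `k`-dimensional affine subspace of `ℝⁿ`. -/
def IsRegionOfDim {n : ℕ} (k : ℕ) (U : Set (EuclideanSpace ℝ (Fin n))) : Prop :=
  ∃ A : AffineSubspace ℝ (EuclideanSpace ℝ (Fin n)),
    Module.finrank ℝ A.direction = k ∧
    U ⊆ (A : Set (EuclideanSpace ℝ (Fin n))) ∧ IsConnected U ∧
    ∃ V, IsOpen V ∧ U = V ∩ (A : Set (EuclideanSpace ℝ (Fin n)))

/-- The relative interior of `U` inside the affine subspace `A`: points of `U`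
having a relative neighborhood in `A` contained in `U`. Since regions are
relatively open, every point of a region is relatively interior to it;
we record the hypothesis nevertheless, as in the paper. -/
def InRelativeInterior {n : ℕ} (U : Set (EuclideanSpace ℝ (Fin n)))
    (x : EuclideanSpace ℝ (Fin n)) : Prop :=
  ∃ ε > (0:ℝ),
    Metric.ball x ε ∩ (affineSpan ℝ U : Set (EuclideanSpace ℝ (Fin n))) ⊆ U

open scoped RealInnerProductSpace

theorem LinearMap.exists_comp_eq_of_ker_le {K M V V' : Type*} [DivisionRing K]
    [AddCommGroup M] [Module K M] [AddCommGroup V] [Module K V] [AddCommGroup V'] [Module K V']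
    (T : M →ₗ[K] V) (T' : M →ₗ[K] V') (h : LinearMap.ker T ≤ LinearMap.ker T') :
    ∃ L : V →ₗ[K] V', L ∘ₗ T = T' := by
  obtain ⟨L, hL⟩ :=
    LinearMap.exists_extend (((LinearMap.ker T).liftQ T' h) ∘ₗ T.quotKerEquivRange.symm.toLinearMap)
  refine ⟨L, LinearMap.ext fun c => ?_⟩
  have hc := LinearMap.congr_fun hL ⟨T c, LinearMap.mem_range_self T c⟩
  simpa [LinearMap.quotKerEquivRange_symm_apply_image] using hc

section InnerProductSpace

variable {E F : Type*} [NormedAddCommGroup E] [InnerProductSpace ℝ E]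
  [NormedAddCommGroup F] [InnerProductSpace ℝ F]

theorem exists_linearMap_of_inner_eq {ι : Type*} (v : ι → E) (v' : ι → F)
    (h : ∀ i j, ⟪v i, v j⟫ = ⟪v' i, v' j⟫) :
    ∃ L : E →ₗ[ℝ] F, (∀ i, L (v i) = v' i) ∧ ∀ w ∈ Submodule.span ℝ (range v), ‖L w‖ = ‖w‖ := by
  set T := Finsupp.linearCombination ℝ v
  set T' := Finsupp.linearCombination ℝ v'
  have hnorm : ∀ c, ‖T' c‖ = ‖T c‖ := fun c => by
    rw [norm_eq_sqrt_real_inner, norm_eq_sqrt_real_inner]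
    congr 1
    simp only [T, T', Finsupp.linearCombination_apply, Finsupp.sum_inner, Finsupp.inner_sum,
      real_inner_smul_left, real_inner_smul_right, h]
  obtain ⟨L, hL⟩ := LinearMap.exists_comp_eq_of_ker_le T T' fun c hc => by
    rw [LinearMap.mem_ker, ← norm_eq_zero, hnorm, norm_eq_zero, ← LinearMap.mem_ker]
    exact hc
  refine ⟨L, fun i => by simpa [T, T'] using LinearMap.congr_fun hL (Finsupp.single i 1), ?_⟩
  rw [← Finsupp.range_linearCombination]
  rintro _ ⟨c, rfl⟩
  rw [← LinearMap.comp_apply, hL, hnorm]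

theorem exists_affineMap_eqOn_of_dist_eq {f : E → F} {S : Set E} (hS : S.Nonempty)
    (hf : ∀ y ∈ S, ∀ z ∈ S, dist (f y) (f z) = dist y z) :
    ∃ A : E →ᵃ[ℝ] F, EqOn f A S ∧
      ∀ p ∈ affineSpan ℝ S, ∀ q ∈ affineSpan ℝ S, dist (A p) (A q) = dist p q := by
  obtain ⟨x, hx⟩ := hS
  have hnorm : ∀ y ∈ S, ∀ z ∈ S, ‖f y - f z‖ = ‖y - z‖ := by simpa only [dist_eq_norm] using hf
  obtain ⟨L, hLv, hL⟩ := exists_linearMap_of_inner_eq (fun y : S => (y : E) - x)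
    (fun y : S => f y - f x) fun y z => by
      simp only [real_inner_eq_norm_mul_self_add_norm_mul_self_sub_norm_sub_mul_self_div_two,
        sub_sub_sub_cancel_right, hnorm y y.2 x hx, hnorm z z.2 x hx, hnorm y y.2 z z.2]
  have hspan : (affineSpan ℝ S).direction = Submodule.span ℝ (range fun y : S => (y : E) - x) := by
    rw [direction_affineSpan, vectorSpan_eq_span_vsub_set_right ℝ hx, image_eq_range]
    rfl
  refine ⟨L.toAffineMap + AffineMap.const ℝ E (f x - L x), fun y hy => ?_, fun p hp q hq => ?_⟩
  · have hLy := hLv ⟨y, hy⟩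
    simp only [map_sub] at hLy
    show f y = L y + (f x - L x)
    linear_combination (norm := module) -hLy
  · have hpq : p - q ∈ (affineSpan ℝ S).direction := AffineSubspace.vsub_mem_direction hp hq
    rw [hspan] at hpq
    simp [dist_eq_norm, ← map_sub, hL _ hpq]

theorem eqOn_convexHull_inter_of_lipschitzOnWith {f : E → F} {A : E →ᵃ[ℝ] F} {S Ω : Set E}
    (hf : LipschitzOnWith 1 f Ω) (hSΩ : S ⊆ Ω) (hfA : EqOn f A S)
    (hA : ∀ p ∈ convexHull ℝ S, ∀ z ∈ S, dist (A p) (A z) = dist p z) :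
    EqOn f A (convexHull ℝ S ∩ Ω) := by
  rintro p ⟨hp, hpΩ⟩
  set d := f p - A p with hd
  -- `‖f p - A z‖ ≤ ‖A p - A z‖`, expanded around `d = f p - A p` into a condition affine in `z`
  have hS : S ⊆ A ⁻¹' {y | ‖d‖ ^ 2 / 2 + ⟪d, A p⟫ ≤ ⟪d, y⟫} := fun z hz => by
    have hlip : ‖d + (A p - A z)‖ ≤ ‖A p - A z‖ := by
      rw [hd, sub_add_sub_cancel, ← dist_eq_norm, ← dist_eq_norm, hA p hp z hz, ← hfA hz]
      simpa using hf.dist_le_mul p hpΩ z (hSΩ hz)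
    have hsq := pow_le_pow_left₀ (norm_nonneg _) hlip 2
    rw [norm_add_sq_real, inner_sub_right] at hsq
    simp only [mem_preimage, mem_ofPred_eq]
    linarith
  have hconv : Convex ℝ (A ⁻¹' {y | ‖d‖ ^ 2 / 2 + ⟪d, A p⟫ ≤ ⟪d, y⟫}) :=
    (convex_halfSpace_ge (innerₛₗ ℝ d).isLinear _).affine_preimage A
  have hAp := convexHull_min hS hconv hp
  simp only [mem_preimage, mem_ofPred_eq] at hAp
  have hd0 : ‖d‖ = 0 := by nlinarith [norm_nonneg d]
  exact sub_eq_zero.mp (norm_eq_zero.mp hd0)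

theorem norm_sub_eq_of_norm_add_smul_le {a b : E} {a' b' : F} {t : ℝ} (ht : 0 < t)
    (ha : ‖a'‖ = ‖a‖) (hb : ‖b'‖ = ‖b‖) (hsub : ‖a' - b'‖ ≤ ‖a - b‖)
    (hadd : ‖a' + t • b'‖ ≤ ‖a + t • b‖) : ‖a' - b'‖ = ‖a - b‖ := by
  have hsub2 := pow_le_pow_left₀ (norm_nonneg _) hsub 2
  have hadd2 := pow_le_pow_left₀ (norm_nonneg _) hadd 2
  rw [norm_sub_sq_real, norm_sub_sq_real, ha, hb] at hsub2
  rw [norm_add_sq_real, norm_add_sq_real, ha, norm_smul, norm_smul, hb, real_inner_smul_right,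
    real_inner_smul_right] at hadd2
  have hinner : ⟪a', b'⟫ = ⟪a, b⟫ := le_antisymm (by nlinarith) (by nlinarith)
  rw [← sq_eq_sq₀ (norm_nonneg _) (norm_nonneg _), norm_sub_sq_real, norm_sub_sq_real, ha, hb,
    hinner]

end InnerProductSpace

theorem InRelativeInterior.exists_lineMap_neg_mem {n : ℕ} {U : Set (EuclideanSpace ℝ (Fin n))}
    {x z : EuclideanSpace ℝ (Fin n)} (h : InRelativeInterior U x) (hx : x ∈ U) (hz : z ∈ U) :
    ∃ t : ℝ, 0 < t ∧ AffineMap.lineMap x z (-t) ∈ U := by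
  obtain ⟨ε, hε, hball⟩ := h
  set t := ε / (dist x z + 1)
  have ht : 0 < t := div_pos hε (by positivity)
  refine ⟨t, ht, hball ⟨?_, AffineMap.lineMap_mem _ (subset_affineSpan ℝ U hx)
    (subset_affineSpan ℝ U hz)⟩⟩
  rw [Metric.mem_ball, dist_lineMap_left, norm_neg, Real.norm_of_nonneg ht.le]
  calc t * dist x z < t * (dist x z + 1) := by gcongr; linarith
    _ = ε := div_mul_cancel₀ ε (by positivity)

section Euclidean

variable {n : ℕ} {F : Type*} [NormedAddCommGroup F] [InnerProductSpace ℝ F]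
  {f : EuclideanSpace ℝ (Fin n) → F} {U₁ U₂ : Set (EuclideanSpace ℝ (Fin n))}
  {x : EuclideanSpace ℝ (Fin n)}

theorem dist_eq_on_union_of_inRelativeInterior {A : EuclideanSpace ℝ (Fin n) →ᵃ[ℝ] F}
    (hf : LipschitzOnWith 1 f (U₁ ∪ U₂)) (hx₁ : x ∈ U₁) (hx₂ : x ∈ U₂)
    (hint : InRelativeInterior U₂ x) (hfA : EqOn f A U₂)
    (h₁ : ∀ y ∈ U₁, ∀ z ∈ U₁, dist (f y) (f z) = dist y z)
    (h₂ : ∀ y ∈ U₂, ∀ z ∈ U₂, dist (f y) (f z) = dist y z) :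
    ∀ y ∈ U₁ ∪ U₂, ∀ z ∈ U₁ ∪ U₂, dist (f y) (f z) = dist y z := by
  have hcross : ∀ y ∈ U₁, ∀ z ∈ U₂, dist (f y) (f z) = dist y z := by
    intro y hy z hz
    have hlip : ∀ w ∈ U₂, ‖f y - f w‖ ≤ ‖y - w‖ := fun w hw => by
      simpa [dist_eq_norm] using hf.dist_le_mul y (Or.inl hy) w (Or.inr hw)
    obtain ⟨t, ht, hw⟩ := hint.exists_lineMap_neg_mem hx₂ hz
    have hyw := hlip _ hw
    rw [hfA hw, AffineMap.apply_lineMap, ← hfA hx₂, ← hfA hz] at hyw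
    simp only [dist_eq_norm, AffineMap.lineMap_apply, vsub_eq_sub, vadd_eq_add] at hyw h₁ h₂ ⊢
    rw [← sub_sub_sub_cancel_right (f y) (f z) (f x), ← sub_sub_sub_cancel_right y z x]
    refine norm_sub_eq_of_norm_add_smul_le ht (h₁ y hy x hx₁) (h₂ z hz x hx₂) ?_ ?_
    · simpa only [sub_sub_sub_cancel_right] using hlip z hz
    · rwa [show f y - f x + t • (f z - f x) = f y - (-t • (f z - f x) + f x) by module,
        show y - x + t • (z - x) = y - (-t • (z - x) + x) by module]
  rintro y (hy | hy) z (hz | hz)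
  · exact h₁ y hy z hz
  · exact hcross y hy z hz
  · rw [dist_comm, hcross z hz y hy, dist_comm]
  · exact h₂ y hy z hz

end Euclidean

theorem affine_isometry_on_convex_hull_of_regions_general
    {n : ℕ}
    (Ω : Set (EuclideanSpace ℝ (Fin n)))
    (u : EuclideanSpace ℝ (Fin n) → EuclideanSpace ℝ (Fin (n+1)))
    (hu : LipschitzOnWith 1 u Ω)
    (U₁ U₂ : Set (EuclideanSpace ℝ (Fin n)))
    (hU₁Ω : U₁ ⊆ Ω) (hU₂Ω : U₂ ⊆ Ω)
    (x : EuclideanSpace ℝ (Fin n)) (hx : x ∈ U₁ ∩ U₂)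
    (hxint₂ : InRelativeInterior U₂ x)
    (hu₁ : IsAffineIsometryOn u U₁) (hu₂ : IsAffineIsometryOn u U₂) :
    IsAffineIsometryOn u (convexHull ℝ (U₁ ∪ U₂) ∩ Ω) := by
  obtain ⟨hx₁, hx₂⟩ := hx
  obtain ⟨⟨A₂, hA₂⟩, hd₂⟩ := hu₂
  have hUΩ : U₁ ∪ U₂ ⊆ Ω := union_subset hU₁Ω hU₂Ω
  have hU := dist_eq_on_union_of_inRelativeInterior (hu.mono hUΩ) hx₁ hx₂ hxint₂ hA₂ hu₁.2 hd₂
  obtain ⟨A, huA, hA⟩ := exists_affineMap_eqOn_of_dist_eq ⟨x, Or.inl hx₁⟩ hU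
  have hspan := convexHull_subset_affineSpan (𝕜 := ℝ) (U₁ ∪ U₂)
  have hconv : EqOn u A (convexHull ℝ (U₁ ∪ U₂) ∩ Ω) :=
    eqOn_convexHull_inter_of_lipschitzOnWith hu hUΩ huA fun p hp z hz =>
      hA p (hspan hp) z (subset_affineSpan ℝ _ hz)
  refine ⟨⟨A, hconv⟩, fun p hp q hq => ?_⟩
  rw [hconv hp, hconv hq]
  exact hA p (hspan hp.1) q (hspan hq.1)

/-- **Spreading affine isometries from two crossing regions (Corollary 3.14).**
Let `u : Ω → ℝ^{n+1}` be 1-Lipschitz on the bounded open set `Ω ⊆ ℝⁿ`, and let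
`U₁`, `U₂` be regions in `Ω` of dimensions `k₁`, `k₂` meeting at a point `x`
interior to both, on each of which `u` is an affine isometry. Then `u` is an
affine isometry on `conv(U₁ ∪ U₂) ∩ Ω`. -/
theorem affine_isometry_on_convex_hull_of_regions
    {n : ℕ}
    (Ω : Set (EuclideanSpace ℝ (Fin n)))
    (hΩopen : IsOpen Ω) (hΩbdd : Bornology.IsBounded Ω)
    (u : EuclideanSpace ℝ (Fin n) → EuclideanSpace ℝ (Fin (n+1)))
    (hu : LipschitzOnWith 1 u Ω)
    (k₁ k₂ : ℕ) (hk₁ : k₁ ≤ n) (hk₂ : k₂ ≤ n)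
    (U₁ U₂ : Set (EuclideanSpace ℝ (Fin n)))
    (hU₁ : IsRegionOfDim k₁ U₁) (hU₂ : IsRegionOfDim k₂ U₂)
    (hU₁Ω : U₁ ⊆ Ω) (hU₂Ω : U₂ ⊆ Ω)
    (x : EuclideanSpace ℝ (Fin n)) (hx : x ∈ U₁ ∩ U₂)
    (hxint₁ : InRelativeInterior U₁ x) (hxint₂ : InRelativeInterior U₂ x)
    (hu₁ : IsAffineIsometryOn u U₁) (hu₂ : IsAffineIsometryOn u U₂) :
    IsAffineIsometryOn u (convexHull ℝ (U₁ ∪ U₂) ∩ Ω) :=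
  affine_isometry_on_convex_hull_of_regions_general Ω u hu U₁ U₂ hU₁Ω hU₂Ω x hx hxint₂ hu₁ hu₂
end
end

section
/- Let γ ∈ C^{1,1}([0, ℓ], ℝⁿ) be parametrized by arclength (|γ'(t)| = 1 for all t) and let 𝐍₁, …, 𝐍_{n−1} : [0, ℓ] → ℝⁿ be Lipschitz maps such that for each t, (γ'(t), 𝐍₁(t), …, 𝐍_{n−1}(t)) is an orthonormal basis of ℝⁿ with det[γ'(t), 𝐍₁(t), …, 𝐍_{n−1}(t)] = 1. For a.e. t define the curvatures κ_i(t) := ⟨γ''(t), 𝐍_i(t)⟩, and let F_γ(t) := { γ(t) + Σ_{i=1}^{n−1} s_i 𝐍_i(t) : s ∈ ℝ^{n−1} } be the front at t. For t̃ ≠ t with F_γ(t) not parallel to F_γ(t̃), set F(t, t̃) := F_γ(t) ∩ F_γ(t̃), and for a unit vector s ∈ 𝕊^{n−2} let L_s(t, t̃) ∈ (0, ∞] be the positive value of S for which γ(t) + S Σ s_i 𝐍_i(t) ∈ F(t, t̃), if such S exists, and +∞ otherwise; set L_s^γ(t) := inf_{t̃ ≠ t} L_s(t, t̃). Then for almost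 every t ∈ [0, ℓ] and every s ∈ 𝕊^{n−2}: L_s^γ(t) · ( Σ_{i=1}^{n−1} s_i κ_i(t) ) ≤ 1; equivalently, if Σ s_i κ_i(t) > 0 then L_s^γ(t) ≤ 1 / ( Σ s_i κ_i(t) ). -/
open MeasureTheory Matrix Filter Topology Set
open scoped ENNReal NNReal Topology InnerProductSpace Classical

noncomputable section

/-- The leading front of the moving frame `(γ', N₁, …, N_m)` at time `t`: the
affine hyperplane through `γ t` spanned by `N₁ t, …, N_m t`. -/
def leadFront {m : ℕ} (γ : ℝ → EuclideanSpace ℝ (Fin (m+1)))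
    (N : Fin m → ℝ → EuclideanSpace ℝ (Fin (m+1))) (t : ℝ) :
    Set (EuclideanSpace ℝ (Fin (m+1))) :=
  {y | ∃ s : Fin m → ℝ, y = γ t + ∑ i, s i • N i t}

/-- The fronts at times `t` and `t'` are parallel: their direction spaces
coincide. -/
def FrontsParallel {m : ℕ} (N : Fin m → ℝ → EuclideanSpace ℝ (Fin (m+1)))
    (t t' : ℝ) : Prop :=
  Submodule.span ℝ (Set.range fun i => N i t)
    = Submodule.span ℝ (Set.range fun i => N i t')

/-- `Ldist γ N t t' s`: the (positive) distance travelled from `γ t` in the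
direction `∑ sᵢ • Nᵢ t` before hitting the intersection
`F(t,t') = F_γ(t) ∩ F_γ(t')` of the fronts; `∞` when the fronts are parallel or
when the intersection is never reached. -/
def Ldist {m : ℕ} (γ : ℝ → EuclideanSpace ℝ (Fin (m+1)))
    (N : Fin m → ℝ → EuclideanSpace ℝ (Fin (m+1))) (t t' : ℝ)
    (s : EuclideanSpace ℝ (Fin m)) : ℝ≥0∞ :=
  if FrontsParallel N t t' then ⊤
  else sInf {x : ℝ≥0∞ | ∃ S : ℝ, x = ENNReal.ofReal S ∧ 0 < S ∧
    γ t + S • (∑ i, s i • N i t) ∈ leadFront γ N t ∩ leadFront γ N t'}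

/-- `Lmin γ N ℓ t s = L_s^γ(t)`: the infimum over `t' ≠ t` in `[0, ℓ]` of the
distances `Ldist γ N t t' s`. -/
def Lmin {m : ℕ} (γ : ℝ → EuclideanSpace ℝ (Fin (m+1)))
    (N : Fin m → ℝ → EuclideanSpace ℝ (Fin (m+1))) (ℓ : ℝ) (t : ℝ)
    (s : EuclideanSpace ℝ (Fin m)) : ℝ≥0∞ :=
  ⨅ t' ∈ (Set.Icc (0:ℝ) ℓ \ {t}), Ldist γ N t t' s

/-- Any vector orthogonal to the first vector of an orthonormal frame
`(e, N'₁, …, N'_m)` of `ℝ^{m+1}` is a linear combination of the `N'ᵢ`. -/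
lemma frame_decomp {m : ℕ} (e : EuclideanSpace ℝ (Fin (m+1)))
    (N' : Fin m → EuclideanSpace ℝ (Fin (m+1)))
    (he : ‖e‖ = 1) (heN : ∀ i, ⟪e, N' i⟫_ℝ = 0)
    (hNN : ∀ i j, ⟪N' i, N' j⟫_ℝ = if i = j then 1 else 0)
    (v : EuclideanSpace ℝ (Fin (m+1))) (hv : ⟪e, v⟫_ℝ = 0) :
    ∃ c : Fin m → ℝ, v = ∑ i, c i • N' i := by
  have horth : Orthonormal ℝ (Fin.cons e N' : Fin (m+1) → EuclideanSpace ℝ (Fin (m+1))) := by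
    rw [orthonormal_iff_ite]
    intro i j
    induction i using Fin.cases with
    | zero =>
      induction j using Fin.cases with
      | zero =>
        rw [if_pos rfl, Fin.cons_zero, real_inner_self_eq_norm_mul_norm, he, one_mul]
      | succ j =>
        rw [if_neg (Fin.succ_ne_zero j).symm, Fin.cons_zero, Fin.cons_succ]
        exact heN j
    | succ i =>
      induction j using Fin.cases with
      | zero =>
        rw [if_neg (Fin.succ_ne_zero i), Fin.cons_succ, Fin.cons_zero, real_inner_comm]
        exact heN i
      | succ j =>
        rw [Fin.cons_succ, Fin.cons_succ, hNN i j]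
        simp [Fin.succ_inj]
  have hspan : ⊤ ≤ Submodule.span ℝ
      (Set.range (Fin.cons e N' : Fin (m+1) → EuclideanSpace ℝ (Fin (m+1)))) := by
    rw [horth.linearIndependent.span_eq_top_of_card_eq_finrank
      (by simp [finrank_euclideanSpace_fin])]
  set B := OrthonormalBasis.mk horth hspan with hB
  have hrepr := B.sum_repr' v
  refine ⟨fun i => ⟪N' i, v⟫_ℝ, ?_⟩
  have hBc : ∀ i, B i = (Fin.cons e N' : Fin (m+1) → EuclideanSpace ℝ (Fin (m+1))) i := by
    intro i; rw [hB, OrthonormalBasis.coe_mk]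
  conv_lhs => rw [← hrepr]
  simp only [hBc]
  rw [Fin.sum_univ_succ]
  simp only [Fin.cons_zero, Fin.cons_succ, hv, zero_smul, zero_add]

/-- **Bound on the distance to the intersection of nearby fronts
(Lemma 4.6).** Let `γ ∈ C^{1,1}([0,ℓ], ℝ^{m+1})` be parametrized by arclength,
with an orthonormal positively oriented Lipschitz moving frame
`(γ', N₁, …, N_m)` and curvatures `κ_i(t) = ⟨γ''(t), N_i(t)⟩`. Then for a.e.
`t ∈ [0,ℓ]` and every unit vector `s ∈ 𝕊^{m-1}`,
`L_s^γ(t) · (∑ s_i κ_i(t)) ≤ 1`. -/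
theorem front_intersection_distance_bound
    {m : ℕ} (ℓ : ℝ) (hℓ : 0 < ℓ)
    (γ γ' γ'' : ℝ → EuclideanSpace ℝ (Fin (m+1)))
    (hγ' : ∀ t ∈ Set.Icc (0:ℝ) ℓ, HasDerivAt γ (γ' t) t)
    (K : NNReal) (hγ'lip : LipschitzOnWith K γ' (Set.Icc (0:ℝ) ℓ))
    (harc : ∀ t ∈ Set.Icc (0:ℝ) ℓ, ‖γ' t‖ = 1)
    (N : Fin m → ℝ → EuclideanSpace ℝ (Fin (m+1)))
    (KN : NNReal) (hNlip : ∀ i, LipschitzOnWith KN (N i) (Set.Icc (0:ℝ) ℓ))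
    (hON : ∀ t ∈ Set.Icc (0:ℝ) ℓ,
      (∀ i, ⟪γ' t, N i t⟫_ℝ = 0) ∧
      (∀ i j, ⟪N i t, N j t⟫_ℝ = if i = j then 1 else 0))
    (hdet : ∀ t ∈ Set.Icc (0:ℝ) ℓ,
      Matrix.det (Matrix.of fun p q : Fin (m+1) =>
        (Fin.cons (γ' t) (fun i => N i t) :
          Fin (m+1) → EuclideanSpace ℝ (Fin (m+1))) q p) = 1)
    (hγ'' : ∀ᵐ t ∂(volume.restrict (Set.Icc (0:ℝ) ℓ)),
      HasDerivAt γ' (γ'' t) t) :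
    ∀ᵐ t ∂(volume.restrict (Set.Icc (0:ℝ) ℓ)),
      ∀ s : EuclideanSpace ℝ (Fin m), ‖s‖ = 1 →
        Lmin γ N ℓ t s * ENNReal.ofReal (∑ i, s i * ⟪γ'' t, N i t⟫_ℝ) ≤ 1 := by
  have hae1 : ∀ᵐ t ∂(volume.restrict (Set.Icc (0:ℝ) ℓ)), t ∈ Set.Icc (0:ℝ) ℓ :=
    ae_restrict_mem measurableSet_Icc
  have hae2 : ∀ᵐ t ∂(volume.restrict (Set.Icc (0:ℝ) ℓ)), t ≠ ℓ := by
    rw [ae_iff]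
    have h1 : {t : ℝ | ¬ t ≠ ℓ} = {ℓ} := by ext x; simp
    rw [h1, Measure.restrict_apply (measurableSet_singleton ℓ)]
    exact measure_mono_null Set.inter_subset_left Real.volume_singleton
  filter_upwards [hγ'', hae1, hae2] with t hdt htmem htne
  intro s hs
  set κ : ℝ := ∑ i, s i * ⟪γ'' t, N i t⟫_ℝ with hκdef
  rcases le_or_gt κ 0 with hκ | hκ
  · rw [ENNReal.ofReal_of_nonpos hκ, mul_zero]; exact zero_le_one
  have htlt : t < ℓ := lt_of_le_of_ne htmem.2 htne
  set u : EuclideanSpace ℝ (Fin (m+1)) := ∑ i, s i • N i t with hu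
  have hκu : ⟪u, γ'' t⟫_ℝ = κ := by
    rw [hu, sum_inner, hκdef]
    exact Finset.sum_congr rfl fun i _ => by
      rw [real_inner_smul_left, real_inner_comm]
  set G : ℝ → ℝ := fun r => ⟪γ r - γ t, γ' r⟫_ℝ with hG
  set H : ℝ → ℝ := fun r => ⟪u, γ' r⟫_ℝ with hH
  have hG0 : G t = 0 := by simp [hG]
  have hH0 : H t = 0 := by
    have : ⟪u, γ' t⟫_ℝ = 0 := by
      rw [hu, sum_inner]
      refine Finset.sum_eq_zero fun i _ => ?_
      rw [real_inner_smul_left, real_inner_comm, (hON t htmem).1 i, mul_zero]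
    simpa [hH] using this
  have hGd : HasDerivAt G 1 t := by
    have h1 := HasDerivAt.inner ℝ ((hγ' t htmem).sub_const (γ t)) hdt
    have h2 : ⟪γ t - γ t, γ'' t⟫_ℝ + ⟪γ' t, γ' t⟫_ℝ = 1 := by
      rw [sub_self, inner_zero_left, zero_add, real_inner_self_eq_norm_mul_norm,
        harc t htmem, one_mul]
    rw [hG]; rw [h2] at h1; exact h1
  have hHd : HasDerivAt H κ t := by
    have h1 := HasDerivAt.inner ℝ (hasDerivAt_const t u) hdt
    have h2 : ⟪u, γ'' t⟫_ℝ + ⟪(0 : EuclideanSpace ℝ (Fin (m+1))), γ' t⟫_ℝ = κ := by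
      rw [inner_zero_left, add_zero, hκu]
    rw [hH]; rw [h2] at h1; exact h1
  have hGs : Tendsto (slope G t) (𝓝[≠] t) (𝓝 1) := hasDerivAt_iff_tendsto_slope.mp hGd
  have hHs : Tendsto (slope H t) (𝓝[≠] t) (𝓝 κ) := hasDerivAt_iff_tendsto_slope.mp hHd
  have hκne : κ ≠ 0 := ne_of_gt hκ
  have hφs : Tendsto (fun r => G r / H r) (𝓝[≠] t) (𝓝 (1/κ)) := by
    refine Tendsto.congr' ?_ (hGs.div hHs hκne)
    filter_upwards [self_mem_nhdsWithin] with r hr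
    have hrne : r ≠ t := by simpa using hr
    have hrt : r - t ≠ 0 := sub_ne_zero.mpr hrne
    show slope G t r / slope H t r = G r / H r
    rw [slope_def_field, slope_def_field, hG0, hH0, sub_zero, sub_zero]
    rcases eq_or_ne (H r) 0 with h0 | h0
    · simp [h0]
    · field_simp
  have hsub : 𝓝[>] t ≤ 𝓝[≠] t :=
    nhdsWithin_mono t fun x hx => ne_of_gt hx
  have hHpos : ∀ᶠ r in 𝓝[>] t, 0 < H r := by
    have h1 : Tendsto (slope H t) (𝓝[>] t) (𝓝 κ) := hHs.mono_left hsub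
    filter_upwards [h1.eventually (eventually_gt_nhds hκ), self_mem_nhdsWithin] with r hsl hr
    have hrt : (0:ℝ) < r - t := sub_pos.mpr hr
    have hHr : H r = slope H t r * (r - t) := by
      rw [slope_def_field, hH0, sub_zero, div_mul_cancel₀ _ (ne_of_gt hrt)]
    rw [hHr]; exact mul_pos hsl hrt
  have hφpos : ∀ᶠ r in 𝓝[>] t, 0 < G r / H r :=
    (hφs.mono_left hsub).eventually (eventually_gt_nhds (one_div_pos.mpr hκ))
  have hmain : Lmin γ N ℓ t s ≤ ENNReal.ofReal (1/κ) := by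
    refine ENNReal.le_of_forall_pos_le_add fun ε hε _ => ?_
    have hεR : (0:ℝ) < ε := hε
    have hφlt : ∀ᶠ r in 𝓝[>] t, G r / H r < 1/κ + ε :=
      (hφs.mono_left hsub).eventually (eventually_lt_nhds (lt_add_of_pos_right _ hεR))
    have hIoo : Set.Ioo t ℓ ∈ 𝓝[>] t := Ioo_mem_nhdsGT_of_mem ⟨le_refl t, htlt⟩
    obtain ⟨r, hrIoo, hrH, hrφpos, hrφlt⟩ :=
      ((eventually_of_mem hIoo fun x hx => hx).and (hHpos.and (hφpos.and hφlt))).exists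
    have hrne : r ≠ t := ne_of_gt hrIoo.1
    have hrIcc : r ∈ Set.Icc (0:ℝ) ℓ := ⟨le_trans htmem.1 hrIoo.1.le, hrIoo.2.le⟩
    have hHne : H r ≠ 0 := ne_of_gt hrH
    set S : ℝ := G r / H r with hSdef
    -- the candidate point lies in the front at time t
    have hmem1 : γ t + S • u ∈ leadFront γ N t := by
      refine ⟨fun i => S * s i, ?_⟩
      rw [hu, Finset.smul_sum]
      congr 1
      refine Finset.sum_congr rfl fun i _ => ?_
      show S • (s i • N i t) = (S * s i) • N i t
      rw [smul_smul]
    -- the candidate point lies in the front at time r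
    have hv : ⟪γ' r, (γ t + S • u) - γ r⟫_ℝ = 0 := by
      have h1 : ⟪γ' r, γ t - γ r⟫_ℝ = - G r := by
        rw [← neg_sub (γ r) (γ t), inner_neg_right, real_inner_comm, hG]
      have h2 : ⟪γ' r, u⟫_ℝ = H r := by rw [real_inner_comm, hH]
      rw [add_sub_right_comm, inner_add_right, h1, real_inner_smul_right, h2, hSdef,
        div_mul_cancel₀ _ hHne, neg_add_cancel]
    obtain ⟨c, hc⟩ := frame_decomp (γ' r) (fun i => N i r) (harc r hrIcc)
      ((hON r hrIcc).1) ((hON r hrIcc).2) _ hv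
    have hmem2 : γ t + S • u ∈ leadFront γ N r := by
      refine ⟨c, ?_⟩
      rw [← hc]
      abel
    -- the fronts are not parallel
    have hnp : ¬ FrontsParallel N t r := by
      intro hp
      have hus : u ∈ Submodule.span ℝ (Set.range fun i => N i t) := by
        rw [hu]
        exact Submodule.sum_mem _ fun i _ =>
          Submodule.smul_mem _ _ (Submodule.subset_span ⟨i, rfl⟩)
      rw [FrontsParallel] at hp
      rw [hp] at hus
      have hw : ∀ w ∈ Submodule.span ℝ (Set.range fun i => N i r), ⟪w, γ' r⟫_ℝ = 0 := by
        intro w hwmem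
        induction hwmem using Submodule.span_induction with
        | mem x hx =>
          obtain ⟨i, rfl⟩ := hx
          rw [real_inner_comm]
          exact (hON r hrIcc).1 i
        | zero => exact inner_zero_left _
        | add x y _ _ hx hy => rw [inner_add_left, hx, hy, add_zero]
        | smul a x _ hx => rw [real_inner_smul_left, hx, mul_zero]
      exact hHne (by rw [hH]; exact hw u hus)
    have hLd : Ldist γ N t r s ≤ ENNReal.ofReal S := by
      rw [Ldist, if_neg hnp]
      refine sInf_le ⟨S, rfl, hrφpos, ?_⟩
      rw [← hu]
      exact ⟨hmem1, hmem2⟩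
    have hrmem : r ∈ Set.Icc (0:ℝ) ℓ \ {t} := ⟨hrIcc, by simp [hrne]⟩
    calc Lmin γ N ℓ t s ≤ Ldist γ N t r s := by
          rw [Lmin]; exact iInf₂_le r hrmem
      _ ≤ ENNReal.ofReal S := hLd
      _ ≤ ENNReal.ofReal (1/κ + ε) := ENNReal.ofReal_le_ofReal hrφlt.le
      _ ≤ ENNReal.ofReal (1/κ) + ε := by
          rw [ENNReal.ofReal_add (by positivity) ε.coe_nonneg, ENNReal.ofReal_coe_nnreal]
  calc Lmin γ N ℓ t s * ENNReal.ofReal κ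
      ≤ ENNReal.ofReal (1/κ) * ENNReal.ofReal κ := mul_le_mul_left hmain _
    _ = ENNReal.ofReal (1/κ * κ) := (ENNReal.ofReal_mul (by positivity)).symm
    _ = 1 := by rw [one_div_mul_cancel hκne, ENNReal.ofReal_one]
end
end
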